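/- arXiv:1209.0108 — 3 statements merged into one kernel-verified Lean document; each statement's English description precedes it below -/
import Mathlib

section
/- Let N ≥ 1. The full Dirac operator D̃_N, acting on the Hilbert space M_(N+1)(ℂ) ⊗ ℂ² by D̃_N(a ⊗ v) = a ⊗ v + Σ_{k=1}^{3} [J_k, a] ⊗ σ_k v, has eigenvalues ℓ and −ℓ, each with multiplicity 2ℓ, for every ℓ = 1, …, N, together with the eigenvalue N+1 with multiplicity 2N+2; equivalently, its characteristic polynomial is (X − (N+1))^(2N+2) · ∏_{ℓ=1}^{N} (X − ℓ)^(2ℓ) (X + ℓ)^(2ℓ). -/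
noncomputable section
open Matrix Polynomial Kronecker

/-- The diagonal matrix `H` with `H|m⟩ = m|m⟩`, `m = i - N/2` for index `i : Fin (N+1)`. -/
def Hmat (N : ℕ) : Matrix (Fin (N + 1)) (Fin (N + 1)) ℂ :=
  Matrix.diagonal fun i => (i : ℂ) - (N : ℂ) / 2

/-- The raising operator `E` with `E|m⟩ = √((j-m)(j+m+1)) |m+1⟩`, `j = N/2`. -/
def Emat (N : ℕ) : Matrix (Fin (N + 1)) (Fin (N + 1)) ℂ := fun p q =>
  if (p : ℕ) = (q : ℕ) + 1 then (Real.sqrt ((N - (q : ℕ)) * ((q : ℕ) + 1)) : ℂ) else 0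

def Fmat (N : ℕ) : Matrix (Fin (N + 1)) (Fin (N + 1)) ℂ := (Emat N)ᴴ

/-- `J₁ = (E+F)/2`, `J₂ = (E−F)/(2i)`, `J₃ = H`. -/
def Jmat (N : ℕ) : Fin 3 → Matrix (Fin (N + 1)) (Fin (N + 1)) ℂ :=
  ![(1 / 2 : ℂ) • (Emat N + Fmat N),
    (1 / (2 * Complex.I) : ℂ) • (Emat N - Fmat N),
    Hmat N]

/-- The three Pauli matrices. -/
def pauli : Fin 3 → Matrix (Fin 2) (Fin 2) ℂ :=
  ![!![0, 1; 1, 0], !![0, -Complex.I; Complex.I, 0], !![1, 0; 0, -1]]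

/-- The matrix of the commutator map `a ↦ [X, a] = Xa − aX` on `M_(N+1)(ℂ)`,
where a matrix `a` is regarded as the vector of its entries `(p, q) ↦ a p q`. -/
def adMat {n : Type*} [Fintype n] [DecidableEq n] (X : Matrix n n ℂ) :
    Matrix (n × n) (n × n) ℂ := fun r c =>
  X r.1 c.1 * (if r.2 = c.2 then 1 else 0) - (if r.1 = c.1 then 1 else 0) * X c.2 r.2

/-- The full Dirac operator `D̃_N (a ⊗ v) = a ⊗ v + Σ_k [J_k, a] ⊗ σ_k v` as a matrix on
`M_(N+1)(ℂ) ⊗ ℂ²`, whose elements are regarded as vectors indexed by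
`(Fin (N+1) × Fin (N+1)) × Fin 2`. -/
def fullDirac (N : ℕ) :
    Matrix ((Fin (N + 1) × Fin (N + 1)) × Fin 2) ((Fin (N + 1) × Fin (N + 1)) × Fin 2) ℂ :=
  1 + ∑ k : Fin 3, (adMat (Jmat N k)) ⊗ₖ (pauli k)

/-!
Write `e, f, h` for `ad E, ad F, ad (2H)` on `M_(N+1)(ℂ)` and `σ₊, σ₋, σ₃` for the spin-½
triple. Then `D̃_N = 1 + ½ Ω` with `Ω = 2 (e ⊗ σ₋ + f ⊗ σ₊) + h ⊗ σ₃`, the mixed term of the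
Casimir element of `M_(N+1)(ℂ) ⊗ ℂ²`, so `D̃_N` commutes with the total `sl₂`-action
`(h ⊗ 1 + 1 ⊗ σ₃, e ⊗ 1 + 1 ⊗ σ₊, f ⊗ 1 + 1 ⊗ σ₋)`. The adjoint action has the primitive vectors
`E^l` of weight `2l`, `0 ≤ l ≤ N`. Each yields the primitive vector `E^l ⊗ e₊` of weight `2l + 1`,
on which `Ω = 2l`, and, when `l ≥ 1`, `[F, E^l] ⊗ e₊ - 2l E^l ⊗ e₋` of weight `2l - 1`, on which
`Ω = -2l - 2`. Lowering these strings gives `2(N+1)²` joint eigenvectors of `D̃_N` and the total `h`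
with pairwise distinct joint eigenvalues, that is, an eigenbasis of `D̃_N`.
-/

attribute [local instance] LieRing.ofAssociativeRing LieAlgebra.ofAssociativeAlgebra

open LieModule

namespace Matrix

section Kronecker

variable {R l m n p : Type*} [CommRing R]

theorem neg_kronecker (A : Matrix l m R) (B : Matrix n p R) : (-A) ⊗ₖ B = -(A ⊗ₖ B) := by
  ext; simp

theorem kronecker_neg (A : Matrix l m R) (B : Matrix n p R) : A ⊗ₖ (-B) = -(A ⊗ₖ B) := by
  ext; simp

def kroneckerVec : (m → R) →ₗ[R] (n → R) →ₗ[R] (m × n → R) :=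
  LinearMap.mk₂ R (fun v w x => v x.1 * w x.2)
    (fun _ _ _ => by ext; simp [add_mul]) (fun _ _ _ => by ext; simp [mul_assoc])
    (fun _ _ _ => by ext; simp [mul_add]) (fun _ _ _ => by ext; simp [mul_left_comm])

theorem kroneckerVec_apply (v : m → R) (w : n → R) (x : m × n) :
    kroneckerVec v w x = v x.1 * w x.2 :=
  rfl

theorem kronecker_mulVec_kroneckerVec [Fintype m] [Fintype n] (A : Matrix l m R)
    (B : Matrix p n R) (v : m → R) (w : n → R) :
    (A ⊗ₖ B) *ᵥ kroneckerVec v w = kroneckerVec (A *ᵥ v) (B *ᵥ w) := by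
  ext ⟨i, j⟩
  simp only [mulVec, dotProduct, kroneckerMap_apply, Fintype.sum_prod_type, kroneckerVec_apply,
    Finset.sum_mul_sum]
  exact Finset.sum_congr rfl fun _ _ => Finset.sum_congr rfl fun _ _ => by ring

variable [Fintype m] [Fintype n] [DecidableEq m] [DecidableEq n]

def kroneckerSum (A : Matrix m m R) (B : Matrix n n R) : Matrix (m × n) (m × n) R :=
  A ⊗ₖ 1 + 1 ⊗ₖ B

theorem kronecker_lie_kroneckerSum (A A' : Matrix m m R) (B B' : Matrix n n R) :
    ⁅A ⊗ₖ B, kroneckerSum A' B'⁆ = ⁅A, A'⁆ ⊗ₖ B + A ⊗ₖ ⁅B, B'⁆ := by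
  simp only [kroneckerSum, Ring.lie_def, mul_add, add_mul, ← mul_kronecker_mul, Matrix.mul_one,
    Matrix.one_mul, sub_eq_add_neg, add_kronecker, kronecker_add, neg_kronecker, kronecker_neg]
  abel

theorem kroneckerSum_lie_kroneckerSum (A A' : Matrix m m R) (B B' : Matrix n n R) :
    ⁅kroneckerSum A B, kroneckerSum A' B'⁆ = kroneckerSum ⁅A, A'⁆ ⁅B, B'⁆ := by
  simp only [kroneckerSum, Ring.lie_def, mul_add, add_mul, ← mul_kronecker_mul, Matrix.mul_one,
    Matrix.one_mul, sub_eq_add_neg, add_kronecker, kronecker_add, neg_kronecker, kronecker_neg]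
  abel

theorem kronecker_lie_kroneckerVec (A : Matrix m m R) (P : Matrix n n R) (v : m → R)
    (w : n → R) : ⁅A ⊗ₖ P, kroneckerVec v w⁆ = kroneckerVec ⁅A, v⁆ ⁅P, w⁆ :=
  kronecker_mulVec_kroneckerVec A P v w

theorem kroneckerSum_lie_kroneckerVec (A : Matrix m m R) (P : Matrix n n R) (v : m → R)
    (w : n → R) :
    ⁅kroneckerSum A P, kroneckerVec v w⁆ = kroneckerVec ⁅A, v⁆ w + kroneckerVec v ⁅P, w⁆ := by
  rw [kroneckerSum, add_lie, kronecker_lie_kroneckerVec, kronecker_lie_kroneckerVec]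
  simp only [lie_apply, one_mulVec]

end Kronecker

theorem charpoly_eq_prod_of_linearIndependent_eigenvectors {K n ι : Type*} [Field K]
    [Fintype n] [DecidableEq n] [Fintype ι] [DecidableEq ι] (M : Matrix n n K) (μ : ι → K)
    (v : ι → n → K) (hv : LinearIndependent K v) (hcard : Fintype.card ι = Fintype.card n)
    (hM : ∀ i, M *ᵥ v i = μ i • v i) : M.charpoly = ∏ i, (X - C (μ i)) := by
  let b := basisOfLinearIndependentOfCardEqFinrank' v hv (by simpa using hcard)
  have hb : ∀ j, b j = v j := fun j => by simp [b]
  have hdiag : LinearMap.toMatrix b b (toLin' M) = diagonal μ := by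
    ext i j
    rw [LinearMap.toMatrix_apply, hb, toLin'_apply, hM, ← hb, map_smul, b.repr_self,
      diagonal_apply]
    rcases eq_or_ne i j with rfl | hij
    · simp
    · simp [hij]
  rw [← charpoly_toLin', ← LinearMap.charpoly_toMatrix _ b, hdiag, charpoly_diagonal]

end Matrix

theorem Module.End.linearIndependent_of_joint_eigenvectors {K V ι : Type*} [Field K] [Infinite K]
    [AddCommGroup V] [Module K V] [Finite ι] (f g : Module.End K V) (μ ν : ι → K) (v : ι → V)
    (hμν : Function.Injective fun i => (μ i, ν i)) (hf : ∀ i, f (v i) = μ i • v i)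
    (hg : ∀ i, g (v i) = ν i • v i) (hv : ∀ i, v i ≠ 0) : LinearIndependent K v := by
  -- For `c` outside this finite set, `c • f + g` has pairwise distinct eigenvalues on the `v i`.
  obtain ⟨c, hc⟩ :=
    (Set.finite_range fun p : ι × ι => (ν p.2 - ν p.1) / (μ p.1 - μ p.2)).exists_notMem
  refine Module.End.eigenvectors_linearIndependent' (c • f + g) (fun i => c * μ i + ν i) ?_ v
    fun i => ?_
  · intro i j hij
    simp only at hij
    by_cases hμ : μ i = μ j
    · exact hμν (Prod.ext hμ (by rw [hμ] at hij; exact add_left_cancel hij))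
    · refine absurd ⟨(i, j), ?_⟩ hc
      rw [div_eq_iff (sub_ne_zero.mpr hμ)]
      linear_combination -hij
  · rw [Module.End.hasEigenvector_iff, Module.End.mem_eigenspace_iff]
    refine ⟨?_, hv i⟩
    simp only [LinearMap.add_apply, LinearMap.smul_apply, hf, hg, smul_smul, add_smul]

theorem LieModule.lie_toEnd_pow_apply_of_lie_eq_zero {R L M : Type*} [CommRing R] [LieRing L]
    [LieAlgebra R L] [AddCommGroup M] [Module R M] [LieRingModule L M] [LieModule R L M]
    {x y : L} (hxy : ⁅x, y⁆ = 0) {m : M} {c : R} (hm : ⁅x, m⁆ = c • m) (k : ℕ) :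
    ⁅x, (toEnd R L M y ^ k) m⁆ = c • (toEnd R L M y ^ k) m := by
  have hc : Commute (toEnd R L M x) (toEnd R L M y) := by
    rw [commute_iff_lie_eq, ← LieHom.map_lie, hxy, map_zero]
  calc ⁅x, (toEnd R L M y ^ k) m⁆ = (toEnd R L M x * toEnd R L M y ^ k) m := rfl
    _ = c • (toEnd R L M y ^ k) m := by
      rw [(hc.pow_right k).eq, Module.End.mul_apply, toEnd_apply_apply, hm, map_smul]

theorem lie_pow_of_lie_eq_self {A : Type*} [Ring A] {x y : A} (h : ⁅x, y⁆ = y) (k : ℕ) :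
    ⁅x, y ^ k⁆ = k • y ^ k := by
  induction k with
  | zero => simp [Ring.lie_def]
  | succ k ih =>
    calc ⁅x, y ^ (k + 1)⁆ = ⁅x, y ^ k⁆ * y + y ^ k * ⁅x, y⁆ := by
          simp only [Ring.lie_def, pow_succ]; noncomm_ring
      _ = (k + 1) • y ^ (k + 1) := by rw [ih, h, smul_mul_assoc, ← pow_succ, succ_nsmul]

/-- `IsSl2Triple` without the condition `h ≠ 0`, which fails for `(2H, E, F)` when `N = 0`. -/
structure Sl2Relations {L : Type*} [LieRing L] (h e f : L) : Prop where
  lie_e_f : ⁅e, f⁆ = h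
  lie_h_e : ⁅h, e⁆ = 2 • e
  lie_h_f : ⁅h, f⁆ = -(2 • f)

namespace Sl2Relations

section LieModule

variable {R L M : Type*} [CommRing R] [LieRing L] [AddCommGroup M] [Module R M]
  [LieRingModule L M] {h e f : L} {m : M} {μ : R}

theorem isSl2Triple (r : Sl2Relations h e f) (hh : h ≠ 0) : IsSl2Triple h e f :=
  ⟨hh, r.lie_e_f, r.lie_h_e, r.lie_h_f⟩

theorem map [LieAlgebra R L] {L' : Type*} [LieRing L'] [LieAlgebra R L'] (r : Sl2Relations h e f)
    (φ : L →ₗ⁅R⁆ L') : Sl2Relations (φ h) (φ e) (φ f) where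
  lie_e_f := by rw [← φ.map_lie, r.lie_e_f]
  lie_h_e := by rw [← φ.map_lie, r.lie_h_e, map_nsmul]
  lie_h_f := by rw [← φ.map_lie, r.lie_h_f, map_neg, map_nsmul]

theorem lie_h_lie_f [LieAlgebra R L] [LieModule R L M] (r : Sl2Relations h e f)
    (hm : ⁅h, m⁆ = μ • m) : ⁅h, ⁅f, m⁆⁆ = (μ - 2) • ⁅f, m⁆ := by
  rw [leibniz_lie, r.lie_h_f, hm, neg_lie, nsmul_lie, lie_smul]
  module

theorem lie_e_lie_f (r : Sl2Relations h e f) (hm : ⁅h, m⁆ = μ • m) (hem : ⁅e, m⁆ = 0) :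
    ⁅e, ⁅f, m⁆⁆ = μ • m := by
  rw [leibniz_lie, r.lie_e_f, hm, hem, lie_zero, add_zero]

end LieModule

variable {R m n : Type*} [CommRing R] [Fintype m] [Fintype n] [DecidableEq m] [DecidableEq n]
  {h e f : Matrix m m R} {h' e' f' : Matrix n n R}

theorem kroneckerSum (r : Sl2Relations h e f) (r' : Sl2Relations h' e' f') :
    Sl2Relations (kroneckerSum h h') (kroneckerSum e e') (kroneckerSum f f') where
  lie_e_f := by rw [kroneckerSum_lie_kroneckerSum, r.lie_e_f, r'.lie_e_f]
  lie_h_e := by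
    rw [kroneckerSum_lie_kroneckerSum, r.lie_h_e, r'.lie_h_e]
    simp only [Matrix.kroneckerSum, smul_kronecker, kronecker_smul, smul_add]
  lie_h_f := by
    rw [kroneckerSum_lie_kroneckerSum, r.lie_h_f, r'.lie_h_f]
    simp only [Matrix.kroneckerSum, smul_kronecker, kronecker_smul, neg_kronecker,
      kronecker_neg, smul_add, neg_add]

end Sl2Relations

namespace Matrix

variable {R m n : Type*} [CommRing R] [Fintype m] [Fintype n] [DecidableEq m] [DecidableEq n]

/-- Twice the mixed term `e ⊗ f' + f ⊗ e' + ½ h ⊗ h'` of the Casimir element acting on a tensor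
product of two `sl₂`-representations. -/
def mixedCasimir (h e f : Matrix m m R) (h' e' f' : Matrix n n R) : Matrix (m × n) (m × n) R :=
  2 • (e ⊗ₖ f' + f ⊗ₖ e') + h ⊗ₖ h'

theorem mixedCasimir_lie_kroneckerSum {h e f : Matrix m m R} {h' e' f' : Matrix n n R}
    (r : Sl2Relations h e f) (r' : Sl2Relations h' e' f') :
    ⁅mixedCasimir h e f h' e' f', kroneckerSum f f'⁆ = 0 := by
  rw [mixedCasimir, add_lie, nsmul_lie, add_lie, kronecker_lie_kroneckerSum,
    kronecker_lie_kroneckerSum, kronecker_lie_kroneckerSum, r.lie_e_f, r'.lie_e_f, r.lie_h_f,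
    r'.lie_h_f, lie_self, lie_self]
  simp only [smul_kronecker, kronecker_smul, neg_kronecker, kronecker_neg, zero_kronecker,
    kronecker_zero]
  abel

end Matrix

def sigmaPlus : Matrix (Fin 2) (Fin 2) ℂ := !![0, 1; 0, 0]

def sigmaMinus : Matrix (Fin 2) (Fin 2) ℂ := !![0, 0; 1, 0]

def spinUp : Fin 2 → ℂ := ![1, 0]

def spinDown : Fin 2 → ℂ := ![0, 1]

theorem pauli_zero_eq : pauli 0 = sigmaPlus + sigmaMinus := by
  ext i j; fin_cases i <;> fin_cases j <;> simp [pauli, sigmaPlus, sigmaMinus]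

theorem pauli_one_eq : pauli 1 = (-Complex.I) • sigmaPlus + Complex.I • sigmaMinus := by
  ext i j; fin_cases i <;> fin_cases j <;> simp [pauli, sigmaPlus, sigmaMinus]

theorem sl2Relations_pauli : Sl2Relations (pauli 2) sigmaPlus sigmaMinus := by
  refine ⟨?_, ?_, ?_⟩ <;> ext i j <;> fin_cases i <;> fin_cases j <;>
    simp [pauli, sigmaPlus, sigmaMinus, Ring.lie_def] <;> norm_num

theorem sigmaPlus_mulVec_spinUp : sigmaPlus *ᵥ spinUp = 0 := by
  ext i; fin_cases i <;> simp [sigmaPlus, spinUp]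

theorem sigmaPlus_mulVec_spinDown : sigmaPlus *ᵥ spinDown = spinUp := by
  ext i; fin_cases i <;> simp [sigmaPlus, spinUp, spinDown]

theorem sigmaMinus_mulVec_spinUp : sigmaMinus *ᵥ spinUp = spinDown := by
  ext i; fin_cases i <;> simp [sigmaMinus, spinUp, spinDown]

theorem sigmaMinus_mulVec_spinDown : sigmaMinus *ᵥ spinDown = 0 := by
  ext i; fin_cases i <;> simp [sigmaMinus, spinDown]

theorem pauli_two_mulVec_spinUp : pauli 2 *ᵥ spinUp = spinUp := by
  ext i; fin_cases i <;> simp [pauli, spinUp]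

theorem pauli_two_mulVec_spinDown : pauli 2 *ᵥ spinDown = -spinDown := by
  ext i; fin_cases i <;> simp [pauli, spinDown]

theorem kroneckerVec_spinUp_ne_zero {ι : Type*} {v : ι → ℂ} (hv : v ≠ 0) :
    kroneckerVec v spinUp ≠ 0 := by
  intro h0
  apply hv
  ext i
  simpa [kroneckerVec_apply, spinUp] using congr_fun h0 (i, 0)

section SpinHalf

variable {ι : Type*} [Fintype ι] [DecidableEq ι] {h e f : Matrix ι ι ℂ} {v : ι → ℂ} {μ : ℂ}

theorem mixedCasimir_lie_kroneckerVec (w : Fin 2 → ℂ) :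
    ⁅mixedCasimir h e f (pauli 2) sigmaPlus sigmaMinus, kroneckerVec v w⁆ =
      2 • (kroneckerVec ⁅e, v⁆ (sigmaMinus *ᵥ w) + kroneckerVec ⁅f, v⁆ (sigmaPlus *ᵥ w)) +
        kroneckerVec ⁅h, v⁆ (pauli 2 *ᵥ w) := by
  rw [mixedCasimir, add_lie, nsmul_lie, add_lie, kronecker_lie_kroneckerVec,
    kronecker_lie_kroneckerVec, kronecker_lie_kroneckerVec]
  rfl

theorem kroneckerSum_lie_kroneckerVec_spinUp (hv : ⁅h, v⁆ = μ • v) :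
    ⁅kroneckerSum h (pauli 2), kroneckerVec v spinUp⁆ = (μ + 1) • kroneckerVec v spinUp := by
  rw [kroneckerSum_lie_kroneckerVec, hv, lie_apply, pauli_two_mulVec_spinUp,
    LinearMap.map_smul₂, add_smul, one_smul]

theorem kroneckerSum_lie_kroneckerVec_spinUp_eq_zero (hev : ⁅e, v⁆ = 0) :
    ⁅kroneckerSum e sigmaPlus, kroneckerVec v spinUp⁆ = 0 := by
  rw [kroneckerSum_lie_kroneckerVec, hev, lie_apply, sigmaPlus_mulVec_spinUp, map_zero, map_zero,
    LinearMap.zero_apply, add_zero]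

theorem mixedCasimir_lie_kroneckerVec_spinUp (hv : ⁅h, v⁆ = μ • v) (hev : ⁅e, v⁆ = 0) :
    ⁅mixedCasimir h e f (pauli 2) sigmaPlus sigmaMinus, kroneckerVec v spinUp⁆ =
      μ • kroneckerVec v spinUp := by
  rw [mixedCasimir_lie_kroneckerVec, hev, hv, sigmaPlus_mulVec_spinUp, pauli_two_mulVec_spinUp,
    map_zero, LinearMap.zero_apply, map_zero, LinearMap.map_smul₂]
  simp

/-- The primitive vector of weight `μ - 1` in `V ⊗ ℂ²` obtained from one of weight `μ` in `V`. -/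
def antialignedVec (f : Matrix ι ι ℂ) (μ : ℂ) (v : ι → ℂ) : ι × Fin 2 → ℂ :=
  kroneckerVec ⁅f, v⁆ spinUp - μ • kroneckerVec v spinDown

theorem kroneckerSum_lie_antialignedVec (r : Sl2Relations h e f) (hv : ⁅h, v⁆ = μ • v) :
    ⁅kroneckerSum h (pauli 2), antialignedVec f μ v⁆ = (μ - 1) • antialignedVec f μ v := by
  rw [antialignedVec, lie_sub, lie_smul, kroneckerSum_lie_kroneckerVec,
    kroneckerSum_lie_kroneckerVec, r.lie_h_lie_f hv, hv]
  simp only [lie_apply, pauli_two_mulVec_spinUp, pauli_two_mulVec_spinDown, LinearMap.map_smul₂,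
    map_neg]
  module

theorem kroneckerSum_lie_antialignedVec_eq_zero (r : Sl2Relations h e f) (hv : ⁅h, v⁆ = μ • v)
    (hev : ⁅e, v⁆ = 0) : ⁅kroneckerSum e sigmaPlus, antialignedVec f μ v⁆ = 0 := by
  rw [antialignedVec, lie_sub, lie_smul, kroneckerSum_lie_kroneckerVec,
    kroneckerSum_lie_kroneckerVec, r.lie_e_lie_f hv hev, hev]
  simp only [lie_apply, sigmaPlus_mulVec_spinUp, sigmaPlus_mulVec_spinDown, LinearMap.map_smul₂,
    map_zero, LinearMap.zero_apply]
  module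

theorem mixedCasimir_lie_antialignedVec (r : Sl2Relations h e f) (hv : ⁅h, v⁆ = μ • v)
    (hev : ⁅e, v⁆ = 0) :
    ⁅mixedCasimir h e f (pauli 2) sigmaPlus sigmaMinus, antialignedVec f μ v⁆ =
      -(μ + 2) • antialignedVec f μ v := by
  rw [antialignedVec, lie_sub, lie_smul, mixedCasimir_lie_kroneckerVec,
    mixedCasimir_lie_kroneckerVec, r.lie_e_lie_f hv hev, r.lie_h_lie_f hv, hev, hv]
  simp only [lie_apply, sigmaPlus_mulVec_spinUp, sigmaPlus_mulVec_spinDown,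
    sigmaMinus_mulVec_spinUp, sigmaMinus_mulVec_spinDown, pauli_two_mulVec_spinUp,
    pauli_two_mulVec_spinDown, LinearMap.map_smul₂, map_zero, map_neg]
  module

theorem antialignedVec_ne_zero (hμ : μ ≠ 0) (hv : v ≠ 0) : antialignedVec f μ v ≠ 0 := by
  intro h0
  apply hv
  ext i
  simpa [antialignedVec, kroneckerVec_apply, spinUp, spinDown, hμ] using congr_fun h0 (i, 1)

end SpinHalf

section AdjointAction

variable {n : Type*} [Fintype n] [DecidableEq n]

theorem adMat_eq_kroneckerSum (X : Matrix n n ℂ) : adMat X = kroneckerSum X (-Xᵀ) := by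
  ext ⟨p, q⟩ ⟨r, s⟩
  simp only [adMat, kroneckerSum, Matrix.add_apply, kroneckerMap_apply, one_apply,
    Matrix.neg_apply, transpose_apply]
  split_ifs <;> ring

def adMatLieHom : Matrix n n ℂ →ₗ⁅ℂ⁆ Matrix (n × n) (n × n) ℂ where
  toFun := adMat
  map_add' X Y := by
    simp only [adMat_eq_kroneckerSum, kroneckerSum, transpose_add, neg_add, add_kronecker,
      kronecker_add]
    abel
  map_smul' c X := by
    simp only [adMat_eq_kroneckerSum, kroneckerSum, transpose_smul, ← smul_neg, smul_kronecker,
      kronecker_smul, smul_add, RingHom.id_apply]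
  map_lie' {X Y} := by
    rw [adMat_eq_kroneckerSum, adMat_eq_kroneckerSum, adMat_eq_kroneckerSum,
      kroneckerSum_lie_kroneckerSum]
    simp [Ring.lie_def, transpose_mul]

@[simp]
theorem adMatLieHom_apply (X : Matrix n n ℂ) : adMatLieHom X = adMat X :=
  rfl

/-- `vec aᵀ` is the vector `(p, q) ↦ a p q` on which `adMat` acts; Mathlib's `vec` stacks
columns. -/
theorem adMat_lie_vec_transpose (X a : Matrix n n ℂ) : ⁅adMat X, vec aᵀ⁆ = vec ⁅X, a⁆ᵀ := by
  rw [lie_apply, adMat_eq_kroneckerSum, kroneckerSum, add_mulVec, kronecker_mulVec_vec,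
    kronecker_mulVec_vec, Ring.lie_def, transpose_sub, transpose_mul, transpose_mul, ← vec_add]
  simp [sub_eq_add_neg]

end AdjointAction

section SpinRepresentation

variable {N : ℕ}

theorem Emat_apply (p q : Fin (N + 1)) :
    Emat N p q = if (p : ℕ) = q + 1 then (√((N - q) * (q + 1) : ℝ) : ℂ) else 0 :=
  rfl

theorem Fmat_apply (p q : Fin (N + 1)) :
    Fmat N p q = if (q : ℕ) = p + 1 then (√((N - p) * (p + 1) : ℝ) : ℂ) else 0 := by
  simp only [Fmat, conjTranspose_apply, Emat_apply]
  split_ifs <;> simp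

theorem sqrt_ladder_mul_self {q : ℕ} (hq : q ≤ N) :
    (√((N - q) * (q + 1) : ℝ) : ℂ) * √((N - q) * (q + 1) : ℝ) = (N - q) * (q + 1) := by
  have : (q : ℝ) ≤ N := by exact_mod_cast hq
  rw [← Complex.ofReal_mul, Real.mul_self_sqrt (by nlinarith)]
  push_cast
  ring

-- Both closed forms vanish at the boundary index (`p = 0`, resp. `p = N`), where the sum is empty.
theorem Emat_mul_Fmat :
    Emat N * Fmat N = diagonal fun p : Fin (N + 1) => ((N : ℂ) - (p : ℕ) + 1) * (p : ℕ) := by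
  ext p q
  rw [mul_apply, diagonal_apply]
  split_ifs with hpq
  · subst hpq
    rcases Nat.eq_zero_or_pos (p : ℕ) with hp | hp
    · simp [Emat_apply, hp]
    · rw [Fintype.sum_eq_single ⟨p - 1, by omega⟩]
      · simp only [Emat_apply, Fmat_apply, if_pos (show (p : ℕ) = p - 1 + 1 by omega)]
        rw [sqrt_ladder_mul_self (by omega)]
        push_cast [Nat.cast_sub (show 1 ≤ (p : ℕ) from hp)]
        ring
      · intro r hr
        rw [Emat_apply, if_neg, zero_mul]
        exact fun h => hr (Fin.ext (by simp; omega))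
  · refine Finset.sum_eq_zero fun r _ => ?_
    rw [Emat_apply, Fmat_apply]
    split_ifs with h₁ h₂
    · exact absurd (Fin.ext (by omega)) hpq
    all_goals simp

theorem Fmat_mul_Emat :
    Fmat N * Emat N = diagonal fun p : Fin (N + 1) => ((N : ℂ) - (p : ℕ)) * ((p : ℕ) + 1) := by
  ext p q
  rw [mul_apply, diagonal_apply]
  split_ifs with hpq
  · subst hpq
    rcases Nat.lt_or_ge (p : ℕ) N with hp | hp
    · rw [Fintype.sum_eq_single ⟨p + 1, by omega⟩]
      · rw [Fmat_apply, Emat_apply, if_pos rfl, sqrt_ladder_mul_self hp.le]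
      · intro r hr
        rw [Fmat_apply, if_neg, zero_mul]
        exact fun h => hr (Fin.ext (by simp; omega))
    · have : (p : ℂ) = N := by exact_mod_cast (show (p : ℕ) = N by omega)
      rw [this, sub_self, zero_mul]
      refine Finset.sum_eq_zero fun r _ => ?_
      rw [Fmat_apply, if_neg (by omega), zero_mul]
  · refine Finset.sum_eq_zero fun r _ => ?_
    rw [Emat_apply, Fmat_apply]
    split_ifs with h₁ h₂
    · exact absurd (Fin.ext (by omega)) hpq
    all_goals simp

theorem Hmat_lie_Emat : ⁅Hmat N, Emat N⁆ = Emat N := by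
  ext p q
  rw [Ring.lie_def, Hmat, Matrix.sub_apply, diagonal_mul, mul_diagonal, Emat_apply]
  split_ifs with h
  · rw [h]; push_cast; ring
  · ring

theorem Hmat_lie_Fmat : ⁅Hmat N, Fmat N⁆ = -Fmat N := by
  ext p q
  rw [Ring.lie_def, Hmat, Matrix.sub_apply, diagonal_mul, mul_diagonal, Matrix.neg_apply,
    Fmat_apply]
  split_ifs with h
  · rw [h]; push_cast; ring
  · ring

theorem Emat_lie_Fmat : ⁅Emat N, Fmat N⁆ = 2 • Hmat N := by
  rw [Ring.lie_def, Emat_mul_Fmat, Fmat_mul_Emat, Hmat, diagonal_sub, ← diagonal_smul]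
  congr 1
  ext p
  simp only [Pi.smul_apply, nsmul_eq_mul]
  push_cast
  ring

theorem sl2Relations_spin : Sl2Relations (2 • Hmat N) (Emat N) (Fmat N) where
  lie_e_f := Emat_lie_Fmat
  lie_h_e := by rw [nsmul_lie, Hmat_lie_Emat]
  lie_h_f := by rw [nsmul_lie, Hmat_lie_Fmat, smul_neg]

theorem Emat_pow_ne_zero {k : ℕ} (hk : k ≤ N) : Emat N ^ k ≠ 0 := by
  rcases Nat.eq_zero_or_pos N with rfl | hN
  · rw [Nat.le_zero.mp hk, pow_zero]
    exact one_ne_zero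
  have hH : 2 • Hmat N ≠ 0 := fun h0 => by
    have := congr_fun₂ h0 0 0
    simp [Hmat] at this
    omega
  -- `|-j⟩` is a lowest-weight vector of weight `-N`, so `E^k |-j⟩ ≠ 0` for `k ≤ N`.
  let t := (sl2Relations_spin.isSl2Triple hH).symm
  have P : t.HasPrimitiveVectorWith (Pi.single 0 1 : Fin (N + 1) → ℂ) (N : ℂ) :=
    { ne_zero := by simp
      lie_h := by
        rw [lie_apply, neg_mulVec, smul_mulVec, Hmat, diagonal_mulVec_single]
        ext i
        rcases eq_or_ne i 0 with rfl | hi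
        · simp; ring
        · simp [hi]
      lie_e := by
        ext i
        simp [Fmat_apply] }
  intro h0
  apply P.pow_toEnd_f_ne_zero_of_eq_nat rfl hk
  simp [← toLin'_pow, h0]

end SpinRepresentation

section Dirac

variable (N : ℕ)

theorem fullDirac_eq_one_add_mixedCasimir : fullDirac N = 1 + (2⁻¹ : ℂ) •
    mixedCasimir (adMat (2 • Hmat N)) (adMat (Emat N)) (adMat (Fmat N)) (pauli 2) sigmaPlus
      sigmaMinus := by
  have hJ : Jmat N = ![(1 / 2 : ℂ) • (Emat N + Fmat N),
      (1 / (2 * Complex.I) : ℂ) • (Emat N - Fmat N), Hmat N] := rfl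
  have h2H : adMat (2 • Hmat N) = 2 • adMat (Hmat N) := map_nsmul adMatLieHom 2 (Hmat N)
  rw [fullDirac, mixedCasimir, Fin.sum_univ_three, hJ, pauli_zero_eq, pauli_one_eq, h2H]
  simp only [Matrix.cons_val_zero, Matrix.cons_val_one, Matrix.cons_val_two, Matrix.tail_cons,
    Matrix.head_cons, ← adMatLieHom_apply, map_smul, map_add, map_sub]
  simp only [adMatLieHom_apply, smul_kronecker, kronecker_smul, add_kronecker, kronecker_add,
    sub_eq_add_neg, neg_kronecker, two_nsmul]
  match_scalars <;> field_simp <;> ring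

def totalH :
    Matrix ((Fin (N + 1) × Fin (N + 1)) × Fin 2) ((Fin (N + 1) × Fin (N + 1)) × Fin 2) ℂ :=
  kroneckerSum (adMat (2 • Hmat N)) (pauli 2)

def totalE :
    Matrix ((Fin (N + 1) × Fin (N + 1)) × Fin 2) ((Fin (N + 1) × Fin (N + 1)) × Fin 2) ℂ :=
  kroneckerSum (adMat (Emat N)) sigmaPlus

def totalF :
    Matrix ((Fin (N + 1) × Fin (N + 1)) × Fin 2) ((Fin (N + 1) × Fin (N + 1)) × Fin 2) ℂ :=
  kroneckerSum (adMat (Fmat N)) sigmaMinus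

theorem sl2Relations_adMat :
    Sl2Relations (adMat (2 • Hmat N)) (adMat (Emat N)) (adMat (Fmat N)) :=
  sl2Relations_spin.map adMatLieHom

theorem sl2Relations_total : Sl2Relations (totalH N) (totalE N) (totalF N) :=
  (sl2Relations_adMat N).kroneckerSum sl2Relations_pauli

theorem fullDirac_lie_totalF : ⁅fullDirac N, totalF N⁆ = 0 := by
  rw [fullDirac_eq_one_add_mixedCasimir, add_lie, smul_lie, totalF,
    mixedCasimir_lie_kroneckerSum (sl2Relations_adMat N) sl2Relations_pauli, smul_zero, add_zero,
    Ring.lie_def, Matrix.one_mul, Matrix.mul_one, sub_self]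

variable {N}

theorem fullDirac_lie_eq_of_mixedCasimir_lie_eq {x : (Fin (N + 1) × Fin (N + 1)) × Fin 2 → ℂ}
    {c : ℂ} (hx : ⁅mixedCasimir (adMat (2 • Hmat N)) (adMat (Emat N)) (adMat (Fmat N)) (pauli 2)
      sigmaPlus sigmaMinus, x⁆ = c • x) : ⁅fullDirac N, x⁆ = (1 + c / 2) • x := by
  rw [fullDirac_eq_one_add_mixedCasimir, add_lie, smul_lie, hx, lie_apply, one_mulVec, smul_smul,
    add_smul, one_smul, div_eq_inv_mul]

theorem adMat_two_nsmul_Hmat_lie_vec_Emat_pow (l : ℕ) :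
    ⁅adMat (2 • Hmat N), vec (Emat N ^ l)ᵀ⁆ = (2 * l : ℂ) • vec (Emat N ^ l)ᵀ := by
  rw [adMat_lie_vec_transpose, nsmul_lie, lie_pow_of_lie_eq_self Hmat_lie_Emat, transpose_smul,
    transpose_smul, vec_smul, vec_smul]
  module

theorem adMat_Emat_lie_vec_Emat_pow (l : ℕ) : ⁅adMat (Emat N), vec (Emat N ^ l)ᵀ⁆ = 0 := by
  rw [adMat_lie_vec_transpose, (Commute.self_pow _ l).lie_eq, transpose_zero, vec_zero]

theorem vec_Emat_pow_ne_zero {l : ℕ} (hl : l ≤ N) : vec (Emat N ^ l)ᵀ ≠ 0 := by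
  rw [← vec_zero, Ne, vec_inj, transpose_eq_zero]
  exact Emat_pow_ne_zero hl

end Dirac

/-- The strings of the total `sl₂`-action: `inl l` starts at `E^l ⊗ e₊`, `inr l` at the
`antialignedVec` built from `E^(l+1)`; both have highest weight `2l + 1`. -/
abbrev Strand (N : ℕ) := Fin (N + 1) ⊕ Fin N

namespace Strand

variable {N : ℕ}

def deg : Strand N → ℕ := Sum.elim (fun l => l) (fun l => l)

def diracEigenvalue : Strand N → ℤ := Sum.elim (fun l => l + 1) (fun l => -(l + 1))

def primitiveVec : Strand N → (Fin (N + 1) × Fin (N + 1)) × Fin 2 → ℂ :=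
  Sum.elim (fun l => kroneckerVec (vec (Emat N ^ (l : ℕ))ᵀ) spinUp)
    (fun l => antialignedVec (adMat (Fmat N)) (2 * ((l + 1 : ℕ) : ℂ)) (vec (Emat N ^ (l + 1 : ℕ))ᵀ))

theorem totalH_lie_primitiveVec (s : Strand N) :
    ⁅totalH N, s.primitiveVec⁆ = ((2 * s.deg + 1 : ℕ) : ℂ) • s.primitiveVec := by
  rcases s with l | l
  · rw [primitiveVec, Sum.elim_inl, totalH,
      kroneckerSum_lie_kroneckerVec_spinUp (adMat_two_nsmul_Hmat_lie_vec_Emat_pow _)]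
    simp [deg]
  · rw [primitiveVec, Sum.elim_inr, totalH, kroneckerSum_lie_antialignedVec (sl2Relations_adMat N)
      (adMat_two_nsmul_Hmat_lie_vec_Emat_pow _)]
    simp only [deg, Sum.elim_inr]
    push_cast
    module

theorem totalE_lie_primitiveVec (s : Strand N) : ⁅totalE N, s.primitiveVec⁆ = 0 := by
  rcases s with l | l
  · exact kroneckerSum_lie_kroneckerVec_spinUp_eq_zero (adMat_Emat_lie_vec_Emat_pow _)
  · exact kroneckerSum_lie_antialignedVec_eq_zero (sl2Relations_adMat N)
      (adMat_two_nsmul_Hmat_lie_vec_Emat_pow _) (adMat_Emat_lie_vec_Emat_pow _)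

theorem fullDirac_lie_primitiveVec (s : Strand N) :
    ⁅fullDirac N, s.primitiveVec⁆ = (s.diracEigenvalue : ℂ) • s.primitiveVec := by
  rcases s with l | l
  · rw [primitiveVec, Sum.elim_inl, fullDirac_lie_eq_of_mixedCasimir_lie_eq
      (mixedCasimir_lie_kroneckerVec_spinUp (adMat_two_nsmul_Hmat_lie_vec_Emat_pow _)
        (adMat_Emat_lie_vec_Emat_pow _))]
    simp only [diracEigenvalue, Sum.elim_inl]
    push_cast
    module
  · rw [primitiveVec, Sum.elim_inr, fullDirac_lie_eq_of_mixedCasimir_lie_eq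
      (mixedCasimir_lie_antialignedVec (sl2Relations_adMat N)
        (adMat_two_nsmul_Hmat_lie_vec_Emat_pow _) (adMat_Emat_lie_vec_Emat_pow _))]
    simp only [diracEigenvalue, Sum.elim_inr]
    push_cast
    module

theorem primitiveVec_ne_zero (s : Strand N) : s.primitiveVec ≠ 0 := by
  rcases s with l | l
  · exact kroneckerVec_spinUp_ne_zero (vec_Emat_pow_ne_zero (by omega))
  · exact antialignedVec_ne_zero
      (mul_ne_zero two_ne_zero (Nat.cast_ne_zero.mpr (Nat.succ_ne_zero _)))
      (vec_Emat_pow_ne_zero (by omega))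

theorem diracEigenvalue_injective : Function.Injective (diracEigenvalue (N := N)) := by
  rintro (l | l) (l' | l') h <;> simp only [diracEigenvalue, Sum.elim_inl, Sum.elim_inr] at h
  · exact congrArg _ (Fin.ext (by omega))
  · omega
  · omega
  · exact congrArg _ (Fin.ext (by omega))

end Strand

section Eigenbasis

variable {N : ℕ}

theorem totalH_ne_zero : totalH N ≠ 0 := by
  intro h0
  have h := Strand.totalH_lie_primitiveVec (Sum.inl 0 : Strand N)
  rw [h0, zero_lie, eq_comm, smul_eq_zero] at h
  exact h.elim (Nat.cast_ne_zero.mpr (Nat.succ_ne_zero _)) (Strand.primitiveVec_ne_zero _)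

theorem isSl2Triple_total : IsSl2Triple (totalH N) (totalE N) (totalF N) :=
  (sl2Relations_total N).isSl2Triple totalH_ne_zero

theorem Strand.hasPrimitiveVectorWith (s : Strand N) :
    (isSl2Triple_total (N := N)).HasPrimitiveVectorWith s.primitiveVec ((2 * s.deg + 1 : ℕ) : ℂ) :=
  ⟨s.primitiveVec_ne_zero, s.totalH_lie_primitiveVec, s.totalE_lie_primitiveVec⟩

abbrev DiracIndex (N : ℕ) := Σ s : Strand N, Fin (2 * s.deg + 2)

def diracEigenvector (i : DiracIndex N) : (Fin (N + 1) × Fin (N + 1)) × Fin 2 → ℂ :=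
  (toEnd ℂ (Matrix _ _ ℂ) _ (totalF N) ^ (i.2 : ℕ)) (Strand.primitiveVec i.1)

theorem fullDirac_lie_diracEigenvector (i : DiracIndex N) :
    ⁅fullDirac N, diracEigenvector i⁆ = (Strand.diracEigenvalue i.1 : ℂ) • diracEigenvector i :=
  lie_toEnd_pow_apply_of_lie_eq_zero (fullDirac_lie_totalF N)
    (Strand.fullDirac_lie_primitiveVec i.1) _

theorem totalH_lie_diracEigenvector (i : DiracIndex N) :
    ⁅totalH N, diracEigenvector i⁆ =
      (((2 * Strand.deg i.1 + 1 : ℕ) : ℂ) - 2 * (i.2 : ℕ)) • diracEigenvector i :=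
  (Strand.hasPrimitiveVectorWith i.1).lie_h_pow_toEnd_f _

theorem diracEigenvector_ne_zero (i : DiracIndex N) : diracEigenvector i ≠ 0 :=
  (Strand.hasPrimitiveVectorWith i.1).pow_toEnd_f_ne_zero_of_eq_nat rfl (by omega)

theorem linearIndependent_diracEigenvector : LinearIndependent ℂ (diracEigenvector (N := N)) := by
  refine Module.End.linearIndependent_of_joint_eigenvectors (toEnd ℂ _ _ (fullDirac N))
    (toEnd ℂ _ _ (totalH N)) _ _ _ ?_ fullDirac_lie_diracEigenvector totalH_lie_diracEigenvector
    diracEigenvector_ne_zero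
  rintro ⟨s, k⟩ ⟨s', k'⟩ h
  simp only [Prod.mk.injEq, Int.cast_inj] at h
  obtain rfl := Strand.diracEigenvalue_injective h.1
  obtain rfl : k = k' :=
    Fin.ext (by exact_mod_cast (by linear_combination -h.2 / 2 : ((k : ℕ) : ℂ) = k'))
  rfl

theorem sum_range_two_mul_add_two (n : ℕ) : ∑ l ∈ Finset.range n, (2 * l + 2) = n * (n + 1) := by
  induction n with
  | zero => rfl
  | succ n ih => rw [Finset.sum_range_succ, ih]; ring

theorem card_diracIndex :
    Fintype.card (DiracIndex N) = Fintype.card ((Fin (N + 1) × Fin (N + 1)) × Fin 2) := by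
  simp only [Fintype.card_sigma, Fintype.card_fin, Fintype.card_prod, Fintype.sum_sum_type]
  simp only [Strand.deg, Sum.elim_inl, Sum.elim_inr,
    Fin.sum_univ_eq_sum_range (fun l => 2 * l + 2), sum_range_two_mul_add_two]
  ring

theorem prod_diracEigenvalue :
    ∏ i : DiracIndex N, (X - C (Strand.diracEigenvalue i.1 : ℂ)) =
      (X - C ((N : ℂ) + 1)) ^ (2 * N + 2) *
        ∏ ℓ ∈ Finset.Icc 1 N, ((X - C (ℓ : ℂ)) ^ (2 * ℓ) * (X + C (ℓ : ℂ)) ^ (2 * ℓ)) := by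
  rw [← Finset.univ_sigma_univ, Finset.prod_sigma]
  simp only [Finset.prod_const, Finset.card_univ, Fintype.card_fin, Fintype.prod_sum_type]
  simp only [Strand.diracEigenvalue, Strand.deg, Sum.elim_inl, Sum.elim_inr]
  push_cast
  rw [Fin.prod_univ_castSucc]
  simp only [Fin.val_castSucc, Fin.val_last]
  rw [Fin.prod_univ_eq_prod_range (fun l => (X - C ((l : ℂ) + 1)) ^ (2 * l + 2)),
    Fin.prod_univ_eq_prod_range (fun l => (X - C (-((l : ℂ) + 1))) ^ (2 * l + 2)),
    ← Finset.Ico_add_one_right_eq_Icc, Finset.prod_Ico_eq_prod_range, Nat.add_sub_cancel,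
    Finset.prod_mul_distrib]
  have hminus (i : ℕ) :
      (X - C ((i : ℂ) + 1)) ^ (2 * i + 2) = (X - C (((1 + i : ℕ) : ℂ))) ^ (2 * (1 + i)) := by
    rw [add_comm 1 i]; push_cast; ring
  have hplus (i : ℕ) :
      (X - C (-((i : ℂ) + 1))) ^ (2 * i + 2) = (X + C (((1 + i : ℕ) : ℂ))) ^ (2 * (1 + i)) := by
    rw [map_neg, sub_neg_eq_add, add_comm 1 i]; push_cast; ring
  simp only [hminus, hplus]
  ring

end Eigenbasis

theorem fullDirac_charpoly_general (N : ℕ) :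
    (fullDirac N).charpoly =
      (X - C ((N : ℂ) + 1)) ^ (2 * N + 2) *
        ∏ ℓ ∈ Finset.Icc 1 N, ((X - C (ℓ : ℂ)) ^ (2 * ℓ) * (X + C (ℓ : ℂ)) ^ (2 * ℓ)) := by
  rw [(fullDirac N).charpoly_eq_prod_of_linearIndependent_eigenvectors _ _
    linearIndependent_diracEigenvector card_diracIndex fullDirac_lie_diracEigenvector,
    prod_diracEigenvalue]

theorem fullDirac_charpoly (N : ℕ) (hN : 1 ≤ N) :
    (fullDirac N).charpoly =
      (X - C ((N : ℂ) + 1)) ^ (2 * N + 2) *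
        ∏ ℓ ∈ Finset.Icc 1 N, ((X - C (ℓ : ℂ)) ^ (2 * ℓ) * (X + C (ℓ : ℂ)) ^ (2 * ℓ)) :=
  fullDirac_charpoly_general N
end
end

section
/- Let a ∈ M₂(ℂ) be hermitian, written a = a₀·1₂ + a₁σ₁ + a₂σ₂ + a₃σ₃ with a₀, a₁, a₂, a₃ ∈ ℝ. Then the operator norm of the commutator with the N = 1 Dirac operator is ‖[D₁, a ⊗ 1₂]‖ = 2√(a₁² + a₂² + a₃²). -/
noncomputable section
open Matrix

/-- The Dirac operator `D_N = [[1+H, F], [E, 1-H]]` in block form on `ℂ^(N+1) ⊗ ℂ²`. -/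
def DiracOp (N : ℕ) :
    Matrix (Fin (N + 1) ⊕ Fin (N + 1)) (Fin (N + 1) ⊕ Fin (N + 1)) ℂ :=
  Matrix.fromBlocks (1 + Hmat N) (Fmat N) (Emat N) (1 - Hmat N)

/-- `a ⊗ 1₂` in block form. -/
def tensorOne (N : ℕ) (a : Matrix (Fin (N + 1)) (Fin (N + 1)) ℂ) :
    Matrix (Fin (N + 1) ⊕ Fin (N + 1)) (Fin (N + 1) ⊕ Fin (N + 1)) ℂ :=
  Matrix.fromBlocks a 0 0 a

/-- The operator norm of a square complex matrix, acting on Euclidean space. -/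
def opNorm {n : Type*} [Fintype n] [DecidableEq n] (M : Matrix n n ℂ) : ℝ :=
  ‖Matrix.toEuclideanCLM (𝕜 := ℂ) M‖

/-!
The scalar part `a₀` commutes with `D₁`, and the commutator `C = [D₁, a ⊗ 1₂]` is an explicit
`4 × 4` matrix with `C Cᴴ C = 4r² C`, where `r² = a₁² + a₂² + a₃²`. In a C⋆-algebra, `x x⋆ x = c x`
with `x ≠ 0` forces `‖x‖² = ‖c‖`: then `S = x⋆x` is self-adjoint with `S² = c S`, and the C⋆-identity
gives `‖S‖² = ‖S²‖ = ‖c‖ ‖S‖` and `‖S‖ = ‖x‖²`.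
-/

open ComplexConjugate

theorem IsSelfAdjoint.norm_eq_of_mul_self_eq_smul {𝕜 A : Type*} [NormedField 𝕜]
    [NonUnitalNormedRing A] [StarRing A] [CStarRing A] [Module 𝕜 A] [NormSMulClass 𝕜 A]
    {S : A} (hS : IsSelfAdjoint S) (hS0 : S ≠ 0) {c : 𝕜} (h : S * S = c • S) :
    ‖S‖ = ‖c‖ := by
  have hsq : ‖S‖ * ‖S‖ = ‖c‖ * ‖S‖ := by rw [← sq, ← hS.norm_mul_self, h, norm_smul]
  exact mul_right_cancel₀ (norm_ne_zero_iff.mpr hS0) hsq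

theorem CStarRing.norm_sq_eq_of_mul_star_mul_self_eq_smul {𝕜 A : Type*} [NormedField 𝕜]
    [NonUnitalNormedRing A] [StarRing A] [CStarRing A] [Module 𝕜 A] [NormSMulClass 𝕜 A]
    [SMulCommClass 𝕜 A A] {x : A} (hx : x ≠ 0) {c : 𝕜} (h : x * star x * x = c • x) :
    ‖x‖ ^ 2 = ‖c‖ := by
  have hS : star x * x * (star x * x) = c • (star x * x) := by
    rw [← mul_smul_comm, ← h]; simp only [mul_assoc]
  rw [sq, ← CStarRing.norm_star_mul_self]
  exact (IsSelfAdjoint.star_mul_self x).norm_eq_of_mul_self_eq_smul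
    ((star_mul_self_ne_zero_iff x).mpr hx) hS

theorem opNorm_sq_eq_of_mul_conjTranspose_mul_eq_smul {n : Type*} [Fintype n] [DecidableEq n]
    {M : Matrix n n ℂ} (hM : M ≠ 0) {c : ℂ} (h : M * Mᴴ * M = c • M) : opNorm M ^ 2 = ‖c‖ := by
  have hM' : toEuclideanCLM (𝕜 := ℂ) M ≠ 0 :=
    (map_ne_zero_iff _ (toEuclideanCLM (𝕜 := ℂ) (n := n)).injective).mpr hM
  refine CStarRing.norm_sq_eq_of_mul_star_mul_self_eq_smul hM' ?_
  simpa only [map_mul, map_smul, ← star_eq_conjTranspose, map_star] using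
    congrArg (toEuclideanCLM (𝕜 := ℂ) (n := n)) h

theorem DiracOp_mul_tensorOne_sub (N : ℕ) (a : Matrix (Fin (N + 1)) (Fin (N + 1)) ℂ) :
    DiracOp N * tensorOne N a - tensorOne N a * DiracOp N =
      fromBlocks (Hmat N * a - a * Hmat N) (Fmat N * a - a * Fmat N)
        (Emat N * a - a * Emat N) (a * Hmat N - Hmat N * a) := by
  simp only [DiracOp, tensorOne, fromBlocks_multiply, sub_eq_add_neg, fromBlocks_neg,
    fromBlocks_add, mul_zero, zero_mul, add_zero, zero_add, add_mul, mul_add, neg_mul,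
    mul_neg, one_mul, mul_one]
  congr 1 <;> abel

theorem Hmat_one : Hmat 1 = !![-1 / 2, 0; 0, 1 / 2] := by
  ext i j; fin_cases i <;> fin_cases j <;> norm_num [Hmat]

theorem Emat_one : Emat 1 = !![0, 0; 1, 0] := by
  ext i j; fin_cases i <;> fin_cases j <;> simp [Emat]

theorem Fmat_one : Fmat 1 = !![0, 1; 0, 0] := by
  rw [Fmat, Emat_one]; ext i j; fin_cases i <;> fin_cases j <;> simp

def diracCommutatorOne (z w t : ℂ) : Matrix (Fin 2 ⊕ Fin 2) (Fin 2 ⊕ Fin 2) ℂ :=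
  fromBlocks !![0, -w; z, 0] !![z, -t; 0, -z] !![-w, 0; t, w] !![0, w; -z, 0]

theorem DiracOp_one_mul_tensorOne_sub (p q w z : ℂ) :
    DiracOp 1 * tensorOne 1 !![p, w; z, q] - tensorOne 1 !![p, w; z, q] * DiracOp 1 =
      diracCommutatorOne z w (p - q) := by
  rw [DiracOp_mul_tensorOne_sub, Hmat_one, Emat_one, Fmat_one, diracCommutatorOne]
  congr 1 <;> ext i j <;> fin_cases i <;> fin_cases j <;> simp <;> ring

theorem diracCommutatorOne_mul_conjTranspose_mul (z : ℂ) (t : ℝ) :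
    diracCommutatorOne z (conj z) t * (diracCommutatorOne z (conj z) t)ᴴ *
        diracCommutatorOne z (conj z) t =
      ((4 * ‖z‖ ^ 2 + t ^ 2 : ℝ) : ℂ) • diracCommutatorOne z (conj z) t := by
  obtain ⟨x, y⟩ := z
  ext (i | i) (j | j) <;> fin_cases i <;> fin_cases j <;>
    simp [diracCommutatorOne, mul_apply, Fintype.sum_sum_type, Fin.sum_univ_two, Complex.ext_iff,
      Complex.sq_norm, Complex.normSq_apply, -Complex.ofReal_pow] <;> constructor <;> ring

theorem opNorm_diracCommutatorOne (z : ℂ) (t : ℝ) :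
    opNorm (diracCommutatorOne z (conj z) t) = √(4 * ‖z‖ ^ 2 + t ^ 2) := by
  by_cases hC : diracCommutatorOne z (conj z) t = 0
  · have hz : z = 0 := by
      simpa [diracCommutatorOne] using congrFun (congrFun hC (Sum.inl 1)) (Sum.inl 0)
    have ht : t = 0 := by
      simpa [diracCommutatorOne] using congrFun (congrFun hC (Sum.inr 1)) (Sum.inl 0)
    rw [hC, hz, ht]; simp [opNorm]
  · have h := opNorm_sq_eq_of_mul_conjTranspose_mul_eq_smul hC
      (diracCommutatorOne_mul_conjTranspose_mul z t)
    rw [Complex.norm_real, Real.norm_of_nonneg (by positivity)] at h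
    exact (h ▸ Real.sqrt_sq (norm_nonneg _)).symm

theorem pauli_combination_eq_of_real (a₀ a₁ a₂ a₃ : ℝ) :
    ((a₀ : ℂ) • 1 + (a₁ : ℂ) • pauli 0 + (a₂ : ℂ) • pauli 1 + (a₃ : ℂ) • pauli 2 :
        Matrix (Fin (1 + 1)) (Fin (1 + 1)) ℂ) =
      !![((a₀ + a₃ : ℝ) : ℂ), conj ⟨a₁, a₂⟩; ⟨a₁, a₂⟩, ((a₀ - a₃ : ℝ) : ℂ)] := by
  ext i j; fin_cases i <;> fin_cases j <;> simp [pauli, Complex.ext_iff, sub_eq_add_neg]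

theorem comm_norm_N_eq_one (a₀ a₁ a₂ a₃ : ℝ) :
    opNorm (DiracOp 1 * tensorOne 1 ((a₀ : ℂ) • 1 + (a₁ : ℂ) • pauli 0 +
          (a₂ : ℂ) • pauli 1 + (a₃ : ℂ) • pauli 2) -
        tensorOne 1 ((a₀ : ℂ) • 1 + (a₁ : ℂ) • pauli 0 +
          (a₂ : ℂ) • pauli 1 + (a₃ : ℂ) • pauli 2) * DiracOp 1) =
      2 * Real.sqrt (a₁ ^ 2 + a₂ ^ 2 + a₃ ^ 2) := by
  rw [pauli_combination_eq_of_real, DiracOp_one_mul_tensorOne_sub, ← Complex.ofReal_sub,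
    opNorm_diracCommutatorOne]
  have h : 4 * ‖(⟨a₁, a₂⟩ : ℂ)‖ ^ 2 + (a₀ + a₃ - (a₀ - a₃)) ^ 2 =
      2 ^ 2 * (a₁ ^ 2 + a₂ ^ 2 + a₃ ^ 2) := by
    rw [Complex.sq_norm, Complex.normSq_mk]; ring
  rw [h, Real.sqrt_mul' _ (by positivity), Real.sqrt_sq zero_le_two]
end
end

section
/- Let N ≥ 1. The spectral distance between the coherent states at the north and south poles of the fuzzy sphere is d_N(ψ^N_(0,0), ψ^N_(0,π)) = Σ_{k=1}^{N} 1/√(k(N−k+1)). -/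
noncomputable section
open Matrix

/-- The spectral distance between two states (functionals) on `M_(N+1)(ℂ)`:
`d_N(ω, ω') = sup { |ω(a) − ω'(a)| : a = a*, ‖[D_N, a ⊗ 1₂]‖ ≤ 1 }`. -/
def specDist (N : ℕ) (ω ω' : Matrix (Fin (N + 1)) (Fin (N + 1)) ℂ → ℂ) : ℝ :=
  sSup {r : ℝ | ∃ a : Matrix (Fin (N + 1)) (Fin (N + 1)) ℂ, a.IsHermitian ∧
    opNorm (DiracOp N * tensorOne N a - tensorOne N a * DiracOp N) ≤ 1 ∧
    r = ‖ω a - ω' a‖}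

/-- The Bloch coherent state vector `|φ,θ⟩_N`, with component at index `i` (i.e. `m = i − N/2`)
equal to `C(N, i)^(1/2) e^(−i m φ) (sin(θ/2))^(N/2+m) (cos(θ/2))^(N/2−m)`. -/
def blochVec (N : ℕ) (φ θ : ℝ) : Fin (N + 1) → ℂ := fun i =>
  (Real.sqrt (N.choose i) : ℂ) * Complex.exp (-Complex.I * ((i : ℂ) - (N : ℂ) / 2) * (φ : ℂ)) *
    (Real.sin (θ / 2) : ℂ) ^ (i : ℕ) * (Real.cos (θ / 2) : ℂ) ^ (N - (i : ℕ))

/-- The Bloch coherent state `ψ^N_(φ,θ)(a) = ⟨φ,θ| a |φ,θ⟩_N`. -/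
def psiState (N : ℕ) (a : Matrix (Fin (N + 1)) (Fin (N + 1)) ℂ) (φ θ : ℝ) : ℂ :=
  star (blochVec N φ θ) ⬝ᵥ a.mulVec (blochVec N φ θ)

/-!
The `(2,1)` block of `[D_N, a ⊗ 1]` is `[E, a]`, whose `(q+1, q)` entry is
`√((N-q)(q+1)) (a_qq - a_{q+1,q+1})`. Entries are bounded by the operator norm, so consecutive
diagonal entries of an admissible `a` differ by at most `1/√((N-q)(q+1))`, while the two pole states
read off `a_00` and `a_NN`. The bound is attained by the diagonal `a` whose entries are the partial
sums of these weights: it commutes with `H`, and `[D_N, a ⊗ 1]` becomes `±1` on a shifted diagonal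
of each off-diagonal block, hence has norm at most one.
-/

open scoped Matrix.Norms.L2Operator

namespace Matrix

variable {𝕜 m n : Type*} [RCLike 𝕜] [Fintype m] [Fintype n]

theorem IsHermitian.conjTranspose_mul_sub {α : Type*} [Ring α] [StarRing α]
    {a : Matrix n n α} (ha : a.IsHermitian) (X : Matrix n n α) :
    Xᴴ * a - a * Xᴴ = -(X * a - a * X)ᴴ := by
  rw [conjTranspose_sub, conjTranspose_mul, conjTranspose_mul, ha.eq]
  abel

variable [DecidableEq n]

theorem norm_apply_le_l2_opNorm (M : Matrix m n 𝕜) (i : m) (j : n) : ‖M i j‖ ≤ ‖M‖ := by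
  have h := M.l2_opNorm_mulVec (EuclideanSpace.single j (1 : 𝕜))
  rw [PiLp.norm_single, norm_one, mul_one] at h
  refine le_trans (le_of_eq ?_) ((PiLp.norm_apply_le _ i).trans h)
  simp

theorem l2_opNorm_le_one_of_sparse (M : Matrix m n 𝕜)
    (hrow : ∀ i j j', M i j ≠ 0 → M i j' ≠ 0 → j = j')
    (hcol : ∀ i i' j, M i j ≠ 0 → M i' j ≠ 0 → i = i')
    (hle : ∀ i j, ‖M i j‖ ≤ 1) : ‖M‖ ≤ 1 := by
  have hdiag : Mᴴ * M = diagonal fun j => ∑ i, star (M i j) * M i j := by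
    ext j j'
    rw [mul_apply, diagonal_apply]
    split_ifs with h
    · subst h; rfl
    · refine Finset.sum_eq_zero fun i _ => ?_
      by_contra hne
      obtain ⟨h1, h2⟩ := mul_ne_zero_iff.1 hne
      exact h (hrow i j j' (star_ne_zero.1 h1) h2)
  have hcolsum : ∀ j, ‖∑ i, star (M i j) * M i j‖ ≤ 1 := by
    intro j
    by_cases hj : ∃ i, M i j ≠ 0
    · obtain ⟨i, hi⟩ := hj
      rw [Finset.sum_eq_single i (fun i' _ hi' => ?_) (by simp), norm_mul, norm_star]
      · exact mul_le_one₀ (hle i j) (norm_nonneg _) (hle i j)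
      · by_contra hne
        exact hi' (hcol i' i j (right_ne_zero_of_mul hne) hi)
    · push Not at hj
      simp [hj]
  have hsq : ‖M‖ * ‖M‖ ≤ 1 := by
    rw [← l2_opNorm_conjTranspose_mul_self, hdiag, l2_opNorm_diagonal]
    exact (pi_norm_le_iff_of_nonneg zero_le_one).2 hcolsum
  nlinarith [norm_nonneg M]

theorem mul_diagonal_sub_diagonal_mul_apply {α : Type*} [CommRing α] (X : Matrix n n α)
    (d : n → α) (i j : n) : (X * diagonal d - diagonal d * X) i j = X i j * (d j - d i) := by
  simp only [sub_apply, mul_diagonal, diagonal_mul]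
  ring

end Matrix

section

variable {N : ℕ}

theorem blochVec_zero_zero : blochVec N 0 0 = Pi.single 0 1 := by
  funext i
  rcases Fin.eq_zero_or_eq_succ i with rfl | ⟨k, rfl⟩ <;> simp [blochVec]

theorem blochVec_zero_pi : blochVec N 0 Real.pi = Pi.single (Fin.last N) 1 := by
  funext i
  rcases Fin.eq_castSucc_or_eq_last i with ⟨k, rfl⟩ | rfl
  · have : N - (k : ℕ) ≠ 0 := by omega
    simp [blochVec, Real.cos_pi_div_two, this, Fin.castSucc_ne_last]
  · simp [blochVec, Real.sin_pi_div_two]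

theorem psiState_of_blochVec_eq_single {θ : ℝ} {i : Fin (N + 1)}
    (h : blochVec N 0 θ = Pi.single i 1) (a : Matrix (Fin (N + 1)) (Fin (N + 1)) ℂ) :
    psiState N a 0 θ = a i i := by
  simp [psiState, h, Pi.star_single]

theorem commutator_diracOp_tensorOne (a : Matrix (Fin (N + 1)) (Fin (N + 1)) ℂ) :
    DiracOp N * tensorOne N a - tensorOne N a * DiracOp N =
      fromBlocks ((1 + Hmat N) * a - a * (1 + Hmat N)) (Fmat N * a - a * Fmat N)
        (Emat N * a - a * Emat N) ((1 - Hmat N) * a - a * (1 - Hmat N)) := by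
  simp only [DiracOp, tensorOne, fromBlocks_multiply, mul_zero, zero_mul, add_zero,
    zero_add, sub_eq_add_neg, ← fromBlocks_neg, ← fromBlocks_add]

theorem Emat_succ_castSucc (q : Fin N) :
    Emat N q.succ q.castSucc = (Real.sqrt ((N - q) * (q + 1)) : ℂ) := by
  simp [Emat]

theorem Emat_apply_eq_zero {p q : Fin (N + 1)} (h : (p : ℕ) ≠ q + 1) : Emat N p q = 0 := by
  simp [Emat, h]

theorem sqrt_sub_mul_succ_pos (q : Fin N) : 0 < Real.sqrt ((N - q) * (q + 1)) := by
  have : (q : ℝ) < N := by exact_mod_cast q.isLt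
  apply Real.sqrt_pos.2
  nlinarith

theorem Emat_mul_apply_succ (a : Matrix (Fin (N + 1)) (Fin (N + 1)) ℂ) (q : Fin N)
    (r : Fin (N + 1)) : (Emat N * a) q.succ r = Emat N q.succ q.castSucc * a q.castSucc r := by
  rw [mul_apply, Fintype.sum_eq_single q.castSucc fun s hs => ?_]
  rw [Emat_apply_eq_zero, zero_mul]
  exact fun h => hs (Fin.ext (by simp at h ⊢; omega))

theorem mul_Emat_apply_castSucc (a : Matrix (Fin (N + 1)) (Fin (N + 1)) ℂ) (r : Fin (N + 1))
    (q : Fin N) : (a * Emat N) r q.castSucc = a r q.succ * Emat N q.succ q.castSucc := by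
  rw [mul_apply, Fintype.sum_eq_single q.succ fun s hs => ?_]
  rw [Emat_apply_eq_zero, mul_zero]
  exact fun h => hs (Fin.ext (by simp at h ⊢; omega))

theorem sqrt_mul_norm_sub_le_one {a : Matrix (Fin (N + 1)) (Fin (N + 1)) ℂ}
    (hK : opNorm (DiracOp N * tensorOne N a - tensorOne N a * DiracOp N) ≤ 1) (q : Fin N) :
    Real.sqrt ((N - q) * (q + 1)) * ‖a q.castSucc q.castSucc - a q.succ q.succ‖ ≤ 1 := by
  have hentry : (DiracOp N * tensorOne N a - tensorOne N a * DiracOp N)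
      (Sum.inr q.succ) (Sum.inl q.castSucc) =
      Emat N q.succ q.castSucc * (a q.castSucc q.castSucc - a q.succ q.succ) := by
    rw [commutator_diracOp_tensorOne, fromBlocks_apply₂₁, Matrix.sub_apply, Emat_mul_apply_succ,
      mul_Emat_apply_castSucc]
    ring
  calc Real.sqrt ((N - q) * (q + 1)) * ‖a q.castSucc q.castSucc - a q.succ q.succ‖
      = ‖(DiracOp N * tensorOne N a - tensorOne N a * DiracOp N)
          (Sum.inr q.succ) (Sum.inl q.castSucc)‖ := by
        rw [hentry, norm_mul, Emat_succ_castSucc, Complex.norm_real,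
          Real.norm_of_nonneg (Real.sqrt_nonneg _)]
    _ ≤ 1 := (norm_apply_le_l2_opNorm _ _ _).trans hK

def partialWeight (N : ℕ) (i : Fin (N + 1)) : ℝ :=
  ∑ k ∈ Finset.Icc 1 (i : ℕ), 1 / Real.sqrt (k * (N + 1 - k))

theorem partialWeight_nonneg (i : Fin (N + 1)) : 0 ≤ partialWeight N i :=
  Finset.sum_nonneg fun _ _ => by positivity

theorem partialWeight_zero : partialWeight N 0 = 0 := by
  simp [partialWeight]

theorem partialWeight_last :
    partialWeight N (Fin.last N) = ∑ k ∈ Finset.Icc 1 N, 1 / Real.sqrt (k * (N + 1 - k)) :=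
  rfl

theorem sqrt_mul_partialWeight_sub (q : Fin N) :
    Real.sqrt ((N - q) * (q + 1)) * (partialWeight N q.succ - partialWeight N q.castSucc) = 1 := by
  have hk : ((q + 1 : ℕ) : ℝ) * (N + 1 - ((q + 1 : ℕ) : ℝ)) = (N - q) * (q + 1) := by
    push_cast; ring
  rw [partialWeight, partialWeight, Fin.val_succ, Fin.val_castSucc,
    Finset.sum_Icc_succ_top (by omega), add_sub_cancel_left, hk, mul_one_div_cancel (sqrt_sub_mul_succ_pos q).ne']

theorem norm_apply_zero_sub_le_partialWeight {a : Matrix (Fin (N + 1)) (Fin (N + 1)) ℂ}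
    (hK : opNorm (DiracOp N * tensorOne N a - tensorOne N a * DiracOp N) ≤ 1)
    (i : Fin (N + 1)) : ‖a 0 0 - a i i‖ ≤ partialWeight N i := by
  induction i using Fin.induction with
  | zero => simp [partialWeight_zero]
  | succ q ih =>
    have hstep : ‖a q.castSucc q.castSucc - a q.succ q.succ‖ ≤
        partialWeight N q.succ - partialWeight N q.castSucc := by
      refine le_of_mul_le_mul_left ?_ (sqrt_sub_mul_succ_pos q)
      rw [sqrt_mul_partialWeight_sub]
      exact sqrt_mul_norm_sub_le_one hK q
    calc ‖a 0 0 - a q.succ q.succ‖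
        ≤ ‖a 0 0 - a q.castSucc q.castSucc‖ + ‖a q.castSucc q.castSucc - a q.succ q.succ‖ :=
          norm_sub_le_norm_sub_add_norm_sub _ _ _
      _ ≤ partialWeight N q.succ := by linarith

def shiftUp (N : ℕ) : Matrix (Fin (N + 1)) (Fin (N + 1)) ℂ := fun p q =>
  if (q : ℕ) = p + 1 then 1 else 0

def partialWeightDiag (N : ℕ) : Matrix (Fin (N + 1)) (Fin (N + 1)) ℂ :=
  diagonal fun i => (partialWeight N i : ℂ)

theorem partialWeightDiag_isHermitian : (partialWeightDiag N).IsHermitian :=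
  isHermitian_diagonal_of_self_adjoint _ (by ext; simp)

theorem commutator_Emat_partialWeightDiag :
    Emat N * partialWeightDiag N - partialWeightDiag N * Emat N = -(shiftUp N)ᴴ := by
  ext p q
  rw [partialWeightDiag, mul_diagonal_sub_diagonal_mul_apply]
  by_cases h : (p : ℕ) = q + 1
  · obtain ⟨q, rfl, rfl⟩ : ∃ q' : Fin N, p = q'.succ ∧ q = q'.castSucc :=
      ⟨⟨q, by omega⟩, Fin.ext (by simp [h]), rfl⟩
    have key : (Real.sqrt ((N - q) * (q + 1)) : ℂ) *
        ((partialWeight N q.succ : ℂ) - partialWeight N q.castSucc) = 1 := by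
      exact_mod_cast sqrt_mul_partialWeight_sub q
    simp only [Emat_succ_castSucc, Matrix.neg_apply, conjTranspose_apply, shiftUp, Fin.val_succ,
      Fin.val_castSucc, if_true, star_one]
    linear_combination -key
  · simp [Emat_apply_eq_zero h, shiftUp, h]

theorem commutator_Fmat_partialWeightDiag :
    Fmat N * partialWeightDiag N - partialWeightDiag N * Fmat N = shiftUp N := by
  rw [Fmat, partialWeightDiag_isHermitian.conjTranspose_mul_sub, commutator_Emat_partialWeightDiag,
    conjTranspose_neg, conjTranspose_conjTranspose, neg_neg]

theorem commutator_diracOp_tensorOne_partialWeightDiag :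
    DiracOp N * tensorOne N (partialWeightDiag N) - tensorOne N (partialWeightDiag N) * DiracOp N =
      fromBlocks 0 (shiftUp N) (-(shiftUp N)ᴴ) 0 := by
  have hH : Commute (Hmat N) (partialWeightDiag N) := commute_diagonal _ _
  rw [commutator_diracOp_tensorOne, commutator_Fmat_partialWeightDiag,
    commutator_Emat_partialWeightDiag, ((Commute.one_left _).add_left hH).eq,
    ((Commute.one_left _).sub_left hH).eq, sub_self, sub_self]

theorem norm_fromBlocks_shiftUp_le_one :
    ‖fromBlocks 0 (shiftUp N) (-(shiftUp N)ᴴ) 0‖ ≤ 1 := by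
  apply l2_opNorm_le_one_of_sparse
  · rintro (p | p) (q | q) (r | r) <;> simp [shiftUp] <;> omega
  · rintro (p | p) (q | q) (r | r) <;> simp [shiftUp] <;> omega
  · rintro (p | p) (q | q) <;> simp [shiftUp] <;> split_ifs <;> simp

end

theorem specDist_poles_general (N : ℕ) :
    specDist N (fun a => psiState N a 0 0) (fun a => psiState N a 0 Real.pi) =
      ∑ k ∈ Finset.Icc 1 N, 1 / Real.sqrt (k * (N + 1 - k)) := by
  have hnorth := psiState_of_blochVec_eq_single (blochVec_zero_zero (N := N))
  have hsouth := psiState_of_blochVec_eq_single (blochVec_zero_pi (N := N))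
  refine IsGreatest.csSup_eq ⟨⟨partialWeightDiag N, partialWeightDiag_isHermitian, ?_, ?_⟩, ?_⟩
  · rw [commutator_diracOp_tensorOne_partialWeightDiag]
    exact norm_fromBlocks_shiftUp_le_one
  · dsimp only
    rw [hnorth, hsouth, partialWeightDiag, diagonal_apply_eq, diagonal_apply_eq, partialWeight_zero,
      Complex.ofReal_zero, zero_sub, norm_neg, Complex.norm_real,
      Real.norm_of_nonneg (partialWeight_nonneg _), partialWeight_last]
  · rintro r ⟨a, -, hK, rfl⟩
    dsimp only
    rw [hnorth, hsouth]
    exact norm_apply_zero_sub_le_partialWeight hK (Fin.last N)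

theorem specDist_poles (N : ℕ) (hN : 1 ≤ N) :
    specDist N (fun a => psiState N a 0 0) (fun a => psiState N a 0 Real.pi) =
      ∑ k ∈ Finset.Icc 1 N, 1 / Real.sqrt (k * (N + 1 - k)) :=
  specDist_poles_general N
end
end
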